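/- arXiv:2111.07081 — 3 statements merged into one kernel-verified Lean document; each statement's English description precedes it below -/
import Mathlib

section
/- Let k be a field, A a k-algebra, and φ ∈ A* a linear functional. Then m*(φ) ∈ (A ⊗ A)* lies in the image of A* ⊗ A* ⊆ (A ⊗ A)* if and only if the kernel of φ contains a two-sided ideal I of A of finite codimension. -/
/-!
A bilinear form `B` on `M × N` comes from `M* ⊗ N*` exactly when `m ↦ B(m, ·)` has a kernel of
finite codimension: a pure tensor gives a map of rank at most one, and conversely a basis `eᵢ`
of `M / ker` with coordinate functionals `eᵢ*` writes `B(m, n) = ∑ eᵢ*(m) B(eᵢ, n)`.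
For `B(a, b) = φ(ab)` that kernel is the right ideal `J = {a | φ(aA) = 0}`. The kernel of the
action of `A` on `A/J` by right multiplication is a two-sided ideal inside `J ⊆ ker φ`, of finite
codimension because `End(A/J)` is finite-dimensional. Conversely, an ideal `I ⊆ ker φ` lies
in `J`.
-/

open TensorProduct Module

section Bilinear

variable {k M N : Type*} [Field k] [AddCommGroup M] [Module k M] [AddCommGroup N] [Module k N]

theorem finiteDimensional_range_lcurry_dualDistrib (t : Dual k M ⊗[k] Dual k N) :
    FiniteDimensional k
      (LinearMap.range (lcurry (RingHom.id k) M N k (dualDistrib k M N t))) := by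
  induction t using TensorProduct.induction_on with
  | zero =>
    rw [map_zero, map_zero, LinearMap.range_zero]
    infer_instance
  | tmul f g =>
    refine Submodule.finiteDimensional_of_le (S₂ := k ∙ g) ?_
    rintro _ ⟨m, rfl⟩
    refine Submodule.mem_span_singleton.mpr ⟨f m, ?_⟩
    ext n
    simp [dualDistrib_apply]
  | add t u _ _ =>
    rw [map_add, map_add]
    exact Submodule.finiteDimensional_of_le (LinearMap.range_add_le _ _)

theorem exists_dualDistrib_eq_of_finiteDimensional_quotient_ker (B : M →ₗ[k] N →ₗ[k] k)
    [FiniteDimensional k (M ⧸ LinearMap.ker B)] :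
    ∃ t : Dual k M ⊗[k] Dual k N, ∀ m n, dualDistrib k M N t (m ⊗ₜ n) = B m n := by
  let e := Module.finBasis k (M ⧸ LinearMap.ker B)
  let B' := (LinearMap.ker B).liftQ B le_rfl
  refine ⟨∑ i, (e.coord i ∘ₗ (LinearMap.ker B).mkQ) ⊗ₜ B' (e i), fun m n => ?_⟩
  calc dualDistrib k M N (∑ i, (e.coord i ∘ₗ (LinearMap.ker B).mkQ) ⊗ₜ B' (e i)) (m ⊗ₜ n)
      = ∑ i, e.repr ((LinearMap.ker B).mkQ m) i * B' (e i) n := by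
        simp [dualDistrib_apply]
    _ = B' (∑ i, e.repr ((LinearMap.ker B).mkQ m) i • e i) n := by
        simp only [map_sum, map_smul, LinearMap.sum_apply,
          LinearMap.smul_apply, smul_eq_mul]
    _ = B m n := by rw [e.sum_repr]; rfl

theorem exists_dualDistrib_eq_iff_finiteDimensional_quotient_ker (B : M →ₗ[k] N →ₗ[k] k) :
    (∃ t : Dual k M ⊗[k] Dual k N, ∀ m n, dualDistrib k M N t (m ⊗ₜ n) = B m n) ↔
      FiniteDimensional k (M ⧸ LinearMap.ker B) := by
  refine ⟨fun ⟨t, ht⟩ => ?_, fun _ => exists_dualDistrib_eq_of_finiteDimensional_quotient_ker B⟩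
  obtain rfl : lcurry (RingHom.id k) M N k (dualDistrib k M N t) = B := by
    ext m n
    exact ht m n
  have := finiteDimensional_range_lcurry_dualDistrib t
  exact Module.Finite.equiv (LinearMap.quotKerEquivRange _).symm

end Bilinear

section Algebra

variable {k A : Type*} [Field k] [Ring A] [Algebra k A]

theorem exists_twoSided_le_of_finiteDimensional_quotient (J : Submodule k A)
    (hJ : ∀ x ∈ J, ∀ r : A, x * r ∈ J) [FiniteDimensional k (A ⧸ J)] :
    ∃ I : Submodule k A, (∀ a x : A, x ∈ I → a * x ∈ I ∧ x * a ∈ I) ∧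
      FiniteDimensional k (A ⧸ I) ∧ I ≤ J := by
  let ρ : A →ₗ[k] Module.End k (A ⧸ J) := J.mapQLinear J ∘ₗ
    (LinearMap.mul k A).flip.codRestrict (J.compatibleMaps J) (fun x y hy => hJ y hy x)
  have hρ : ∀ x a, ρ x (J.mkQ a) = J.mkQ (a * x) := fun _ _ => rfl
  have mem_ker : ∀ x, x ∈ LinearMap.ker ρ ↔ ∀ a, a * x ∈ J := by
    intro x
    rw [LinearMap.mem_ker]
    constructor
    · intro h a
      rw [← Submodule.Quotient.mk_eq_zero, ← Submodule.mkQ_apply, ← hρ, h, LinearMap.zero_apply]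
    · intro h
      ext a
      rw [LinearMap.comp_apply, hρ, LinearMap.zero_comp, LinearMap.zero_apply, Submodule.mkQ_apply,
        Submodule.Quotient.mk_eq_zero]
      exact h a
  refine ⟨LinearMap.ker ρ, fun a x hx => ⟨?_, ?_⟩, Module.Finite.equiv ρ.quotKerEquivRange.symm,
    fun x hx => by simpa using (mem_ker x).1 hx 1⟩
  · rw [mem_ker] at hx ⊢
    intro c
    rw [← mul_assoc]
    exact hx _
  · rw [mem_ker] at hx ⊢
    intro c
    rw [← mul_assoc]
    exact hJ _ (hx c) a

theorem finiteDimensional_quotient_ker_mul_compr₂_iff (φ : Dual k A) :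
    FiniteDimensional k (A ⧸ LinearMap.ker ((LinearMap.mul k A).compr₂ φ)) ↔
      ∃ I : Submodule k A, (∀ a x : A, x ∈ I → a * x ∈ I ∧ x * a ∈ I) ∧
        FiniteDimensional k (A ⧸ I) ∧ ∀ x ∈ I, φ x = 0 := by
  set J := LinearMap.ker ((LinearMap.mul k A).compr₂ φ)
  constructor
  · intro _
    have hJ : ∀ x ∈ J, ∀ r : A, x * r ∈ J := by
      intro x hx r
      ext b
      simpa [mul_assoc] using LinearMap.congr_fun hx (r * b)
    obtain ⟨I, hI, hfin, hIJ⟩ := exists_twoSided_le_of_finiteDimensional_quotient J hJ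
    exact ⟨I, hI, hfin, fun x hx => by simpa using LinearMap.congr_fun (hIJ hx) 1⟩
  · rintro ⟨I, hI, hfin, hφ⟩
    have hIJ : I ≤ J := fun x hx => by
      ext b
      exact hφ _ (hI b x hx).2
    exact Module.Finite.of_surjective _ (Submodule.factor_surjective hIJ)

end Algebra

/-- A functional `φ ∈ A*` satisfies condition (SD1) — `m*(φ)` lies in the image of
`A* ⊗ A* ⊆ (A ⊗ A)*` — if and only if it satisfies (SD2) — `ker φ` contains a two-sided
ideal of finite codimension. -/
theorem finiteDual_mem_iff (k : Type*) [Field k] (A : Type*) [Ring A] [Algebra k A]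
    (φ : Dual k A) :
    (∃ t : Dual k A ⊗[k] Dual k A,
        ∀ a b : A, TensorProduct.dualDistrib k A A t (a ⊗ₜ[k] b) = φ (a * b)) ↔
    (∃ I : Submodule k A,
        (∀ (a x : A), x ∈ I → a * x ∈ I ∧ x * a ∈ I) ∧
        FiniteDimensional k (A ⧸ I) ∧
        ∀ x ∈ I, φ x = 0) :=
  (exists_dualDistrib_eq_iff_finiteDimensional_quotient_ker ((LinearMap.mul k A).compr₂ φ)).trans
    (finiteDimensional_quotient_ker_mul_compr₂_iff φ)
end

section
/- Let k be a field and A, B k-algebras with a linear map ρ : B ⊗ A → A ⊗ B. Define m_ρ = (m_A ⊗ m_B) ∘ (id_A ⊗ ρ ⊗ id_B) on (A ⊗ B) ⊗ (A ⊗ B). If ρ is normal and multiplicative, then m_ρ is associative with unit 1_A ⊗ 1_B, making A ⊗ B into an associative unital k-algebra (the twisted tensor product A #_ρ B). -/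
open TensorProduct

variable (k : Type*) [Field k] (A B : Type*) [Ring A] [Algebra k A] [Ring B] [Algebra k B]

/-- `ρ` is normal: it restricts to the tensor swap on `1 ⊗ A` and `B ⊗ 1`. -/
def IsNormalTwist (ρ : B ⊗[k] A →ₗ[k] A ⊗[k] B) : Prop :=
  (∀ a : A, ρ ((1 : B) ⊗ₜ[k] a) = a ⊗ₜ[k] (1 : B)) ∧
  (∀ b : B, ρ (b ⊗ₜ[k] (1 : A)) = (1 : A) ⊗ₜ[k] b)

/-- `ρ` is multiplicative:
`ρ ∘ (id_B ⊗ m_A) = (m_A ⊗ id_B) ∘ (id_A ⊗ ρ) ∘ (ρ ⊗ id_A)` and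
`ρ ∘ (m_B ⊗ id_A) = (id_A ⊗ m_B) ∘ (ρ ⊗ id_B) ∘ (id_B ⊗ ρ)`. -/
def IsMultiplicativeTwist (ρ : B ⊗[k] A →ₗ[k] A ⊗[k] B) : Prop :=
  (∀ (b : B) (a a' : A), ρ (b ⊗ₜ[k] (a * a')) =
      TensorProduct.map (LinearMap.mul' k A) LinearMap.id
        ((TensorProduct.assoc k A A B).symm
          (ρ.lTensor A ((TensorProduct.assoc k A B A)
            (ρ.rTensor A ((b ⊗ₜ[k] a) ⊗ₜ[k] a')))))) ∧
  (∀ (b b' : B) (a : A), ρ ((b * b') ⊗ₜ[k] a) =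
      TensorProduct.map LinearMap.id (LinearMap.mul' k B)
        ((TensorProduct.assoc k A B B)
          (ρ.rTensor B ((TensorProduct.assoc k B A B).symm
            (b ⊗ₜ[k] (ρ (b' ⊗ₜ[k] a)))))))

/-- The middle rearrangement `(A ⊗ B) ⊗ A → (A ⊗ A) ⊗ B` induced by `ρ`. -/
noncomputable def twistMiddle (ρ : B ⊗[k] A →ₗ[k] A ⊗[k] B) :
    (A ⊗[k] B) ⊗[k] A →ₗ[k] (A ⊗[k] A) ⊗[k] B :=
  (TensorProduct.assoc k A A B).symm.toLinearMap ∘ₗ ρ.lTensor A ∘ₗ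
    (TensorProduct.assoc k A B A).toLinearMap

/-- The multiplication `m_ρ = (m_A ⊗ m_B) ∘ (id_A ⊗ ρ ⊗ id_B)` of the twisted tensor
product `A #_ρ B`. -/
noncomputable def twistedMul (ρ : B ⊗[k] A →ₗ[k] A ⊗[k] B) :
    (A ⊗[k] B) ⊗[k] (A ⊗[k] B) →ₗ[k] A ⊗[k] B :=
  TensorProduct.map (LinearMap.mul' k A) (LinearMap.mul' k B) ∘ₗ
    (TensorProduct.assoc k (A ⊗[k] A) B B).toLinearMap ∘ₗ
    (twistMiddle k A B ρ).rTensor B ∘ₗ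
    (TensorProduct.assoc k (A ⊗[k] B) A B).symm.toLinearMap

/-! Inside the untwisted algebra `A ⊗ B` one has
`m_ρ((a ⊗ b) ⊗ (a' ⊗ b')) = (a ⊗ 1) * ρ(b ⊗ a') * (1 ⊗ b')`, so `m_ρ` is left `A`-linear and
right `B`-linear, and the two multiplicativity conditions become
`ρ(b ⊗ a a') = m_ρ(ρ(b ⊗ a) ⊗ (a' ⊗ 1))` and `ρ(b b' ⊗ a) = m_ρ((1 ⊗ b) ⊗ ρ(b' ⊗ a))`.
With these, both bracketings of a product of three pure tensors reduce to
`(a ⊗ 1) * m_ρ(ρ(b ⊗ a') ⊗ ρ(b' ⊗ a'')) * (1 ⊗ b'')`; normality gives the unit. -/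

section TwistedTensorProduct

open Algebra.TensorProduct

variable {k A B}

lemma map_mul'_id_assoc_symm_tmul (a : A) (t : A ⊗[k] B) :
    TensorProduct.map (LinearMap.mul' k A) LinearMap.id
      ((TensorProduct.assoc k A A B).symm (a ⊗ₜ t)) = (a ⊗ₜ 1) * t := by
  induction t using TensorProduct.induction_on with
  | zero => simp
  | tmul x y => simp
  | add s t hs ht => simp only [tmul_add, map_add, hs, ht, mul_add]

lemma map_id_mul'_assoc_tmul (t : A ⊗[k] B) (b : B) :
    TensorProduct.map LinearMap.id (LinearMap.mul' k B) (TensorProduct.assoc k A B B (t ⊗ₜ b)) =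
      t * (1 ⊗ₜ b) := by
  induction t using TensorProduct.induction_on with
  | zero => simp
  | tmul x y => simp
  | add s t hs ht => simp only [add_tmul, map_add, hs, ht, add_mul]

variable {ρ : B ⊗[k] A →ₗ[k] A ⊗[k] B}

lemma twistedMul_tmul_tmul (a a' : A) (b b' : B) :
    twistedMul k A B ρ ((a ⊗ₜ b) ⊗ₜ (a' ⊗ₜ b')) = (a ⊗ₜ 1) * ρ (b ⊗ₜ a') * (1 ⊗ₜ b') := by
  simp only [twistedMul, twistMiddle, LinearMap.comp_apply, LinearEquiv.coe_coe,
    TensorProduct.assoc_symm_tmul, TensorProduct.assoc_tmul, LinearMap.rTensor_tmul,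
    LinearMap.lTensor_tmul]
  induction ρ (b ⊗ₜ a') using TensorProduct.induction_on with
  | zero => simp
  | tmul x y => simp
  | add s t hs ht => simp only [tmul_add, map_add, add_tmul, hs, ht, mul_add, add_mul]

lemma twistedMul_mul_left (a : A) (x y : A ⊗[k] B) :
    twistedMul k A B ρ (((a ⊗ₜ 1) * x) ⊗ₜ y) = (a ⊗ₜ 1) * twistedMul k A B ρ (x ⊗ₜ y) := by
  induction x using TensorProduct.induction_on with
  | zero => simp
  | add s t hs ht => simp only [mul_add, add_tmul, map_add, hs, ht]
  | tmul a₀ b₀ =>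
    induction y using TensorProduct.induction_on with
    | zero => simp
    | add s t hs ht => simp only [tmul_add, map_add, hs, ht, mul_add]
    | tmul a' b' =>
      rw [tmul_mul_tmul, one_mul, twistedMul_tmul_tmul, twistedMul_tmul_tmul]
      simp only [← mul_assoc, tmul_mul_tmul, one_mul]

lemma twistedMul_mul_right (b : B) (x y : A ⊗[k] B) :
    twistedMul k A B ρ (x ⊗ₜ (y * (1 ⊗ₜ b))) = twistedMul k A B ρ (x ⊗ₜ y) * (1 ⊗ₜ b) := by
  induction y using TensorProduct.induction_on with
  | zero => simp
  | add s t hs ht => simp only [add_mul, tmul_add, map_add, hs, ht]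
  | tmul a' b' =>
    induction x using TensorProduct.induction_on with
    | zero => simp
    | add s t hs ht => simp only [add_tmul, map_add, hs, ht, add_mul]
    | tmul a₀ b₀ =>
      rw [tmul_mul_tmul, mul_one, twistedMul_tmul_tmul, twistedMul_tmul_tmul]
      simp only [mul_assoc, tmul_mul_tmul, mul_one]

lemma IsMultiplicativeTwist.map_tmul_mul (hmul : IsMultiplicativeTwist k A B ρ) (b : B)
    (a a' : A) : ρ (b ⊗ₜ (a * a')) = twistedMul k A B ρ (ρ (b ⊗ₜ a) ⊗ₜ (a' ⊗ₜ 1)) := by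
  rw [hmul.1, LinearMap.rTensor_tmul]
  induction ρ (b ⊗ₜ a) using TensorProduct.induction_on with
  | zero => simp
  | add s t hs ht => simp only [add_tmul, map_add, hs, ht]
  | tmul x y =>
    rw [TensorProduct.assoc_tmul, LinearMap.lTensor_tmul, map_mul'_id_assoc_symm_tmul,
      twistedMul_tmul_tmul, ← one_def, mul_one]

lemma IsMultiplicativeTwist.map_mul_tmul (hmul : IsMultiplicativeTwist k A B ρ) (b b' : B)
    (a : A) : ρ ((b * b') ⊗ₜ a) = twistedMul k A B ρ ((1 ⊗ₜ b) ⊗ₜ ρ (b' ⊗ₜ a)) := by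
  rw [hmul.2]
  induction ρ (b' ⊗ₜ a) using TensorProduct.induction_on with
  | zero => simp
  | add s t hs ht => simp only [tmul_add, map_add, hs, ht]
  | tmul u v =>
    rw [TensorProduct.assoc_symm_tmul, LinearMap.rTensor_tmul, map_id_mul'_assoc_tmul,
      twistedMul_tmul_tmul, ← one_def, one_mul]

lemma twistedMul_mul_one_tmul_tmul (hmul : IsMultiplicativeTwist k A B ρ) (t : A ⊗[k] B)
    (a : A) (b b' : B) :
    twistedMul k A B ρ ((t * (1 ⊗ₜ b)) ⊗ₜ (a ⊗ₜ b')) =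
      twistedMul k A B ρ (t ⊗ₜ ρ (b ⊗ₜ a)) * (1 ⊗ₜ b') := by
  induction t using TensorProduct.induction_on with
  | zero => simp
  | add s t hs ht => simp only [add_mul, add_tmul, map_add, hs, ht]
  | tmul x y =>
    have hxy : x ⊗ₜ[k] y = (x ⊗ₜ 1) * (1 ⊗ₜ y) := by simp [tmul_mul_tmul]
    rw [tmul_mul_tmul, mul_one, twistedMul_tmul_tmul, hmul.map_mul_tmul, hxy,
      twistedMul_mul_left]

lemma twistedMul_tmul_mul_tmul_one (hmul : IsMultiplicativeTwist k A B ρ) (a a' : A) (b : B)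
    (s : A ⊗[k] B) :
    twistedMul k A B ρ ((a ⊗ₜ b) ⊗ₜ ((a' ⊗ₜ 1) * s)) =
      (a ⊗ₜ 1) * twistedMul k A B ρ (ρ (b ⊗ₜ a') ⊗ₜ s) := by
  induction s using TensorProduct.induction_on with
  | zero => simp
  | add s t hs ht => simp only [mul_add, tmul_add, map_add, hs, ht]
  | tmul u v =>
    have huv : u ⊗ₜ[k] v = (u ⊗ₜ 1) * (1 ⊗ₜ v) := by simp [tmul_mul_tmul]
    rw [tmul_mul_tmul, one_mul, twistedMul_tmul_tmul, hmul.map_tmul_mul, huv,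
      twistedMul_mul_right, mul_assoc]

lemma twistedMul_assoc_tmul (hmul : IsMultiplicativeTwist k A B ρ) (a a' a'' : A)
    (b b' b'' : B) :
    twistedMul k A B ρ (twistedMul k A B ρ ((a ⊗ₜ b) ⊗ₜ (a' ⊗ₜ b')) ⊗ₜ (a'' ⊗ₜ b'')) =
      twistedMul k A B ρ ((a ⊗ₜ b) ⊗ₜ twistedMul k A B ρ ((a' ⊗ₜ b') ⊗ₜ (a'' ⊗ₜ b''))) := by
  calc _ = (a ⊗ₜ 1) * twistedMul k A B ρ (ρ (b ⊗ₜ a') ⊗ₜ ρ (b' ⊗ₜ a'')) * (1 ⊗ₜ b'') := by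
        rw [twistedMul_tmul_tmul, mul_assoc, twistedMul_mul_left,
          twistedMul_mul_one_tmul_tmul hmul, mul_assoc]
    _ = _ := by
        rw [twistedMul_tmul_tmul, twistedMul_mul_right, twistedMul_tmul_mul_tmul_one hmul]

lemma IsNormalTwist.one_twistedMul (hnorm : IsNormalTwist k A B ρ) (z : A ⊗[k] B) :
    twistedMul k A B ρ ((1 ⊗ₜ 1) ⊗ₜ z) = z := by
  induction z using TensorProduct.induction_on with
  | zero => simp
  | add s t hs ht => simp only [tmul_add, map_add, hs, ht]
  | tmul a b =>
    rw [twistedMul_tmul_tmul, hnorm.1, ← one_def, one_mul, tmul_mul_tmul, mul_one, one_mul]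

lemma IsNormalTwist.twistedMul_one (hnorm : IsNormalTwist k A B ρ) (z : A ⊗[k] B) :
    twistedMul k A B ρ (z ⊗ₜ (1 ⊗ₜ 1)) = z := by
  induction z using TensorProduct.induction_on with
  | zero => simp
  | add s t hs ht => simp only [add_tmul, map_add, hs, ht]
  | tmul a b =>
    rw [twistedMul_tmul_tmul, hnorm.2, ← one_def, mul_one, tmul_mul_tmul, mul_one, one_mul]

end TwistedTensorProduct

/-- If `ρ` is normal and multiplicative, then `m_ρ` is associative with unit `1 ⊗ 1`,
making `A ⊗ B` into an associative unital algebra (the twisted tensor product). -/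
theorem twistedMul_assoc_unital (ρ : B ⊗[k] A →ₗ[k] A ⊗[k] B)
    (hnorm : IsNormalTwist k A B ρ) (hmul : IsMultiplicativeTwist k A B ρ) :
    (twistedMul k A B ρ ∘ₗ (twistedMul k A B ρ).rTensor (A ⊗[k] B) =
      twistedMul k A B ρ ∘ₗ (twistedMul k A B ρ).lTensor (A ⊗[k] B) ∘ₗ
        (TensorProduct.assoc k (A ⊗[k] B) (A ⊗[k] B) (A ⊗[k] B)).toLinearMap) ∧
    (∀ z : A ⊗[k] B,
      twistedMul k A B ρ (((1 : A) ⊗ₜ[k] (1 : B)) ⊗ₜ[k] z) = z ∧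
      twistedMul k A B ρ (z ⊗ₜ[k] ((1 : A) ⊗ₜ[k] (1 : B))) = z) := by
  refine ⟨?_, fun z => ⟨hnorm.one_twistedMul z, hnorm.twistedMul_one z⟩⟩
  ext a b a' b' a'' b''
  exact twistedMul_assoc_tmul hmul a a' a'' b b' b''
end

section
/- Let k be a field and A₀ ⊆ A a finite extension of k-algebras (A finitely generated as both a left and a right A₀-module). A two-sided ideal I of A has finite codimension if and only if there exists a two-sided ideal I₀ of A₀ of finite codimension in A₀ with I₀ ⊆ I. -/
/-!
Going down, `A₀ ⧸ (I ∩ A₀)` embeds into `A ⧸ I`. Going up, write `A = ∑ₜ A₀ t` over the finite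
set `s`; as `I₀ t ⊆ I`, each map `a ↦ a t mod I` factors through the finite-dimensional
`A₀ ⧸ I₀`, and `A ⧸ I` is the sum of the finitely many images.
-/

open Submodule LinearMap in
theorem Submodule.finite_quotient_of_iSup_range_eq_top {R M N ι : Type*} [Ring R]
    [AddCommGroup M] [Module R M] [AddCommGroup N] [Module R N] [Finite ι]
    (f : ι → M →ₗ[R] N) (hf : ⨆ i, range (f i) = ⊤)
    (p : Submodule R M) (q : Submodule R N) [Module.Finite R (M ⧸ p)]
    (hpq : ∀ i, p ≤ q.comap (f i)) : Module.Finite R (N ⧸ q) := by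
  have htop : ⨆ i, range (p.mapQ q (f i) (hpq i)) = ⊤ := by
    simp_rw [range_mapQ, ← map_iSup, hf, map_top, range_mkQ]
  exact Module.finite_def.mpr (htop ▸ fg_iSup _ fun i => fg_range _)

theorem Submodule.finite_quotient_comap {K V W : Type*} [DivisionRing K]
    [AddCommGroup V] [Module K V] [AddCommGroup W] [Module K W]
    (f : V →ₗ[K] W) (q : Submodule K W) [FiniteDimensional K (W ⧸ q)] :
    FiniteDimensional K (V ⧸ q.comap f) :=
  Module.Finite.of_injective ((q.comap f).mapQ q f le_rfl)
    (LinearMap.ker_eq_bot.mp (by rw [ker_mapQ, mkQ_map_self]))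

/-- Let `A₀ ⊆ A` be a finite extension of `k`-algebras (`A` finitely generated as a left
and as a right `A₀`-module). A two-sided ideal `I` of `A` has finite codimension if and
only if it contains a two-sided ideal of `A₀` of finite codimension in `A₀`. -/
theorem cofinite_ideal_iff_of_finite_extension (k : Type*) [Field k] (A : Type*) [Ring A]
    [Algebra k A] (A₀ : Subalgebra k A)
    (hfin : ∃ s : Finset A,
      (∀ x : A, x ∈ Submodule.span k {y : A | ∃ a ∈ A₀, ∃ t ∈ s, y = a * t}) ∧
      (∀ x : A, x ∈ Submodule.span k {y : A | ∃ a ∈ A₀, ∃ t ∈ s, y = t * a}))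
    (I : Submodule k A) (hI : ∀ (a x : A), x ∈ I → a * x ∈ I ∧ x * a ∈ I) :
    FiniteDimensional k (A ⧸ I) ↔
      ∃ I₀ : Submodule k A₀,
        (∀ (a x : A₀), x ∈ I₀ → a * x ∈ I₀ ∧ x * a ∈ I₀) ∧
        FiniteDimensional k (A₀ ⧸ I₀) ∧
        ∀ x ∈ I₀, (x : A) ∈ I := by
  constructor
  · intro _
    exact ⟨I.comap A₀.val.toLinearMap, fun a x hx => hI a x hx,
      I.finite_quotient_comap _, fun x hx => hx⟩
  · rintro ⟨I₀, -, _, hI₀I⟩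
    obtain ⟨s, hspan, -⟩ := hfin
    let mulBy (t : s) : A₀ →ₗ[k] A := LinearMap.mulRight k (t : A) ∘ₗ A₀.val.toLinearMap
    have hrange : ⨆ t, LinearMap.range (mulBy t) = ⊤ := by
      refine eq_top_iff.mpr fun x _ => Submodule.span_le.mpr ?_ (hspan x)
      rintro _ ⟨a, ha, t, ht, rfl⟩
      exact Submodule.mem_iSup_of_mem ⟨t, ht⟩ ⟨⟨a, ha⟩, rfl⟩
    exact Submodule.finite_quotient_of_iSup_range_eq_top mulBy hrange I₀ I
      fun t x hx => (hI t _ (hI₀I x hx)).2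
end
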